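/- arXiv:math-ph/0610054 — 3 statements merged into one kernel-verified Lean document; each statement's English description precedes it below -/
import Mathlib

section
/- If a sequence of contraction operators A_n on a Hilbert space H converges weakly to a unitary operator U (i.e., ⟨ψ, A_n φ⟩ → ⟨ψ, U φ⟩ for all ψ, φ ∈ H), then A_n converges strongly to U, i.e., ‖A_n φ - U φ‖ → 0 for every φ ∈ H. -/
open scoped InnerProductSpace

/-- If a sequence of contractions on a complex Hilbert space converges weakly to a
unitary operator, then it converges strongly. -/
theorem weak_to_strong_convergence_of_contractions_to_unitary
    {H : Type*} [NormedAddCommGroup H] [InnerProductSpace ℂ H] [CompleteSpace H]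
    (A : ℕ → H →L[ℂ] H) (hA : ∀ n, ‖A n‖ ≤ 1)
    (U : H →L[ℂ] H) (hUiso : ∀ x, ‖U x‖ = ‖x‖) (hUsurj : Function.Surjective U)
    (hweak : ∀ ψ φ : H,
      Filter.Tendsto (fun n => (inner ℂ ψ (A n φ) : ℂ)) Filter.atTop
        (nhds (inner ℂ ψ (U φ)))) :
    ∀ φ : H, Filter.Tendsto (fun n => ‖A n φ - U φ‖) Filter.atTop (nhds 0) := by
  intro φ
  -- real parts converge
  have hre : Filter.Tendsto (fun n => (inner ℂ (U φ) (A n φ) : ℂ).re) Filter.atTop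
      (nhds ((inner ℂ (U φ) (U φ) : ℂ).re)) :=
    (Complex.continuous_re.tendsto _).comp (hweak (U φ) φ)
  have hUU : (inner ℂ (U φ) (U φ) : ℂ).re = ‖φ‖ ^ 2 := by
    rw [@inner_self_eq_norm_sq_to_K ℂ]
    simp [hUiso]
    norm_cast
  -- the dominating sequence tends to 0
  have hdom : Filter.Tendsto (fun n => 2 * ‖φ‖ ^ 2 - 2 * (inner ℂ (U φ) (A n φ) : ℂ).re)
      Filter.atTop (nhds 0) := by
    have := (tendsto_const_nhds (x := 2 * ‖φ‖ ^ 2) (f := Filter.atTop (α := ℕ))).sub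
      (hre.const_mul 2)
    rw [hUU, sub_self] at this
    exact this
  -- squeeze for the squared norm
  have hsq : Filter.Tendsto (fun n => ‖A n φ - U φ‖ ^ 2) Filter.atTop (nhds 0) := by
    apply tendsto_of_tendsto_of_tendsto_of_le_of_le tendsto_const_nhds hdom
    · intro n; positivity
    · intro n
      dsimp only
      have hAn : ‖A n φ‖ ≤ ‖φ‖ := by
        calc ‖A n φ‖ ≤ ‖A n‖ * ‖φ‖ := (A n).le_opNorm φ
          _ ≤ 1 * ‖φ‖ := by gcongr; exact hA n
          _ = ‖φ‖ := one_mul _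
      have hexp : ‖A n φ - U φ‖ ^ 2
          = ‖A n φ‖ ^ 2 - 2 * (inner ℂ (A n φ) (U φ) : ℂ).re + ‖U φ‖ ^ 2 :=
        norm_sub_sq (𝕜 := ℂ) _ _
      have hswap : (inner ℂ (A n φ) (U φ) : ℂ).re = (inner ℂ (U φ) (A n φ) : ℂ).re := by
        rw [← inner_conj_symm (𝕜 := ℂ) (U φ) (A n φ), Complex.conj_re]
      rw [hexp, hswap, hUiso]
      have h1 : ‖A n φ‖ ^ 2 ≤ ‖φ‖ ^ 2 := by
        apply pow_le_pow_left₀ (norm_nonneg _) hAn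
      nlinarith
  -- take square roots
  have h := (Real.continuous_sqrt.tendsto 0).comp hsq
  have heq : ((fun x => Real.sqrt x) ∘ fun n => ‖A n φ - U φ‖ ^ 2)
      = fun n => ‖A n φ - U φ‖ := funext fun n => Real.sqrt_sq (norm_nonneg _)
  rw [heq] at h
  simpa using h
end

section
/- Let h : ℝ → [0,∞) be integrable and t > 0. Then lim_{λ ↓ 0} sup_{0 ≤ t' ≤ t} ∫_0^{t'} (∫_{λ^{-2}(t'-s)}^{∞} h(u) du) ds = 0. -/
/-!
Write `T x = ∫_x^∞ h`. Reflecting `s ↦ t' - s`, each integral under the supremum equals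
`∫_0^{t'} T (x / λ²) dx`, which for `t' ≤ t` is at most `∫_0^t T (x / λ²) dx` because `T ≥ 0`.
Since `T` is antitone, bounded by `T 0` and tends to `0` at infinity, dominated convergence sends
this bound to `0` as `λ ↓ 0`.
-/

open MeasureTheory Filter Set Topology

theorem antitone_setIntegral_Ici {f : ℝ → ℝ} (hf : Integrable f) (hf0 : ∀ u, 0 ≤ f u) :
    Antitone fun x => ∫ u in Ici x, f u := fun _ _ hxy =>
  setIntegral_mono_set hf.integrableOn (Eventually.of_forall hf0)
    (Ici_subset_Ici.mpr hxy).eventuallyLE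

section Rescaling

variable {g : ℝ → ℝ}

theorem tendsto_setIntegral_Ioc_comp_mul_of_antitone {ι : Type*} {l : Filter ι}
    [l.IsCountablyGenerated] {c : ι → ℝ} (hg : Antitone g) (hg0 : 0 ≤ g)
    (hg_lim : Tendsto g atTop (𝓝 0)) (hc : Tendsto c l atTop) (t : ℝ) :
    Tendsto (fun i => ∫ x in Ioc 0 t, g (c i * x)) l (𝓝 0) := by
  have hdom : ∀ᶠ i in l, ∀ᵐ x ∂volume.restrict (Ioc 0 t), ‖g (c i * x)‖ ≤ g 0 := by
    filter_upwards [hc.eventually_ge_atTop 0] with i hci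
    refine (ae_restrict_iff' measurableSet_Ioc).mpr (Eventually.of_forall fun x hx => ?_)
    rw [Real.norm_of_nonneg (hg0 _)]
    exact hg (mul_nonneg hci hx.1.le)
  have hlim : ∀ᵐ x ∂volume.restrict (Ioc 0 t), Tendsto (fun i => g (c i * x)) l (𝓝 0) :=
    (ae_restrict_iff' measurableSet_Ioc).mpr <| Eventually.of_forall fun x hx =>
      hg_lim.comp (hc.atTop_mul_const hx.1)
  simpa using tendsto_integral_filter_of_dominated_convergence (fun _ => g 0)
    (Eventually.of_forall fun i =>
      (hg.measurable.comp (measurable_const_mul (c i))).aestronglyMeasurable)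
    hdom (integrableOn_const measure_Ioc_lt_top.ne) hlim

theorem intervalIntegral_comp_mul_sub_le_setIntegral_Ioc (hg : Antitone g) (hg0 : 0 ≤ g)
    {c t t' : ℝ} (hc : 0 ≤ c) (ht' : t' ∈ Icc 0 t) :
    ∫ s in 0..t', g (c * (t' - s)) ≤ ∫ x in Ioc 0 t, g (c * x) := by
  have hgc : Antitone fun x => g (c * x) := fun _ _ hxy => hg (mul_le_mul_of_nonneg_left hxy hc)
  have hreflect : ∫ s in 0..t', g (c * (t' - s)) = ∫ x in Ioc 0 t', g (c * x) := by
    rw [intervalIntegral.integral_comp_sub_left (fun x => g (c * x)), sub_self, sub_zero,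
      intervalIntegral.integral_of_le ht'.1]
  rw [hreflect]
  exact setIntegral_mono_set
    ((hgc.intervalIntegrable (a := 0) (b := t)).1)
    (Eventually.of_forall fun x => hg0 (c * x)) (Ioc_subset_Ioc_right ht'.2).eventuallyLE

end Rescaling

theorem tendsto_inv_sq_nhdsGT_zero : Tendsto (fun x : ℝ => (x ^ 2)⁻¹) (𝓝[>] 0) atTop := by
  simp_rw [← inv_pow]
  exact (tendsto_pow_atTop two_ne_zero).comp tendsto_inv_nhdsGT_zero

theorem sup_tail_integral_tendsto_zero_general
    (h : ℝ → ℝ) (hh_int : Integrable h) (hh_nonneg : ∀ u, 0 ≤ h u)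
    (t : ℝ) :
    Tendsto
      (fun lam : ℝ =>
        ⨆ t' : Set.Icc (0 : ℝ) t,
          ∫ s in (0 : ℝ)..(t' : ℝ),
            ∫ u in Set.Ici ((lam ^ 2)⁻¹ * ((t' : ℝ) - s)), h u)
      (nhdsWithin 0 (Set.Ioi 0)) (nhds 0) := by
  set T : ℝ → ℝ := fun x => ∫ u in Ici x, h u
  have hT_anti : Antitone T := antitone_setIntegral_Ici hh_int hh_nonneg
  have hT_nonneg : 0 ≤ T := fun x => setIntegral_nonneg measurableSet_Ici fun u _ => hh_nonneg u
  refine squeeze_zero (fun lam => Real.iSup_nonneg fun t' => ?_)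
    (fun lam => Real.iSup_le (fun t' => ?_) ?_)
    (tendsto_setIntegral_Ioc_comp_mul_of_antitone hT_anti hT_nonneg
      (tendsto_integral_Ici_zero tendsto_id) tendsto_inv_sq_nhdsGT_zero t)
  · exact intervalIntegral.integral_nonneg t'.2.1 fun s _ => hT_nonneg _
  · exact intervalIntegral_comp_mul_sub_le_setIntegral_Ioc hT_anti hT_nonneg (by positivity) t'.2
  · exact setIntegral_nonneg measurableSet_Ioc fun x _ => hT_nonneg _

/-- For integrable nonnegative `h` and `t > 0`,
`lim_{λ ↓ 0} sup_{0 ≤ t' ≤ t} ∫_0^{t'} (∫_{λ^{-2}(t'-s)}^{∞} h(u) du) ds = 0`. -/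
theorem sup_tail_integral_tendsto_zero
    (h : ℝ → ℝ) (hh_int : Integrable h) (hh_nonneg : ∀ u, 0 ≤ h u)
    (t : ℝ) (ht : 0 < t) :
    Tendsto
      (fun lam : ℝ =>
        ⨆ t' : Set.Icc (0 : ℝ) t,
          ∫ s in (0 : ℝ)..(t' : ℝ),
            ∫ u in Set.Ici ((lam ^ 2)⁻¹ * ((t' : ℝ) - s)), h u)
      (nhdsWithin 0 (Set.Ioi 0)) (nhds 0) :=
  sup_tail_integral_tendsto_zero_general h hh_int hh_nonneg t
end

section
/- Let (a_n)_{n≥0} be a sequence of nonnegative reals with a_n ≤ C^n/√(n!) for some C > 0, and let V, t ≥ 0. Then the double series ∑_{q≥0} ∑_{m ≥ max(n-q,0)} ((2tV)^q/q!) · (√((m+q)!)/√(m!)) · (C^m/√(m!)) converges for every n, and is bounded above by ((2tV + C)^n/√(n!)) · ∑_{r≥0} (2tV + C)^r/√(r!). -/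
/-!
With `s = q + m`, the `(q, m)` term equals `(s choose q) Bᵠ Cᵐ / √s!` (`B = 2tV`), so
summing along the antidiagonals `q + m = s` gives `(B + C)ˢ / √s!` by the binomial theorem,
while the constraint `m ≥ n - q` becomes `s ≥ n`. The tail `∑_{s ≥ n} (B + C)ˢ / √s!` is then
bounded via `n! (s - n)! ≤ s!`, and it converges because `xʳ / √r!` is dominated by
`((4x²)ʳ / r! + 4⁻ʳ) / 2`.
-/

open Finset
open scoped Nat

theorem summable_pow_div_sqrt_factorial (x : ℝ) :
    Summable fun r : ℕ => x ^ r / √(r ! : ℝ) := by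
  refine .of_norm_bounded
    (((Real.summable_pow_div_factorial (4 * x ^ 2)).add
      (summable_geometric_of_lt_one (by norm_num) (by norm_num : (1 / 4 : ℝ) < 1))).div_const 2)
    fun r => ?_
  have hfact : (0 : ℝ) < r ! := mod_cast r.factorial_pos
  set a := (2 * |x|) ^ r / √(r ! : ℝ)
  set b := (1 / 2 : ℝ) ^ r
  have hab : ‖x ^ r / √(r ! : ℝ)‖ = a * b := by
    rw [norm_div, norm_pow, Real.norm_eq_abs, Real.norm_of_nonneg (Real.sqrt_nonneg _),
      div_mul_eq_mul_div, ← mul_pow, mul_comm 2 |x|, mul_assoc]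
    norm_num
  have ha : a ^ 2 = (4 * x ^ 2) ^ r / r ! := by
    rw [div_pow, Real.sq_sqrt hfact.le, ← pow_mul, mul_comm r 2, pow_mul, mul_pow, sq_abs]
    norm_num
  have hb : b ^ 2 = (1 / 4) ^ r := by rw [← pow_mul, mul_comm r 2, pow_mul]; norm_num
  rw [hab, ← ha, ← hb]
  linarith [two_mul_le_add_sq a b]

theorem sqrt_factorial_mul_sqrt_factorial_le (i j : ℕ) :
    √(i ! : ℝ) * √(j ! : ℝ) ≤ √((i + j) ! : ℝ) := by
  rw [← Real.sqrt_mul (by positivity)]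
  exact Real.sqrt_le_sqrt (mod_cast Nat.le_of_dvd (Nat.factorial_pos _)
    (Nat.factorial_mul_factorial_dvd_factorial_add i j))

theorem pow_add_div_sqrt_factorial_le {x : ℝ} (hx : 0 ≤ x) (i j : ℕ) :
    x ^ (i + j) / √((i + j) ! : ℝ) ≤ x ^ i / √(i ! : ℝ) * (x ^ j / √(j ! : ℝ)) := by
  rw [div_mul_div_comm, ← pow_add]
  exact div_le_div_of_nonneg_left (by positivity) (by positivity)
    (sqrt_factorial_mul_sqrt_factorial_le i j)

theorem hasSum_of_hasSum_sum_antidiagonal {A : Type*} [AddMonoid A] [HasAntidiagonal A]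
    {g : A × A → ℝ} {c : ℝ} (hg : 0 ≤ g) (h : HasSum (fun s => ∑ p ∈ antidiagonal s, g p) c) :
    HasSum g c := by
  let e := HasAntidiagonal.sigmaAntidiagonalEquivProd (A := A)
  have hfiber (s : A) : ∑' p : antidiagonal s, g (e ⟨s, p⟩) = ∑ p ∈ antidiagonal s, g p := by
    rw [tsum_fintype]; exact sum_coe_sort (antidiagonal s) g
  have hsum : Summable (g ∘ e) := (summable_sigma_of_nonneg fun _ => hg _).2
    ⟨fun _ => (hasSum_fintype _).summable,
      by simpa only [Function.comp_apply, hfiber] using h.summable⟩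
  rw [← e.hasSum_iff, hsum.hasSum_iff, hsum.tsum_sigma' fun _ => (hasSum_fintype _).summable]
  simpa only [Function.comp_apply, hfiber] using h.tsum_eq

theorem hasSum_ite_le_tsum_nat_add {G : Type*} [AddCommGroup G] [TopologicalSpace G]
    [IsTopologicalAddGroup G] {f : ℕ → G} (hf : Summable f) (n : ℕ) :
    HasSum (fun s => if n ≤ s then f s else 0) (∑' k, f (k + n)) := by
  rw [← hasSum_nat_add_iff' n]
  have hhead : ∑ i ∈ range n, (if n ≤ i then f i else 0) = 0 :=
    sum_eq_zero fun i hi => if_neg (not_le.2 (mem_range.1 hi))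
  simpa [hhead] using ((summable_nat_add_iff n).2 hf).hasSum

theorem pow_div_factorial_mul_sqrt_factorial_div_eq_choose (x y : ℝ) (q m : ℕ) :
    x ^ q / (q ! : ℝ) * (√((m + q)! : ℝ) / √(m ! : ℝ)) * (y ^ m / √(m ! : ℝ))
      = ((m + q).choose q : ℝ) * (x ^ q * y ^ m) / √((m + q)! : ℝ) := by
  have hchoose : ((m + q).choose q : ℝ) * m ! * q ! = (m + q)! :=
    mod_cast Nat.add_choose_mul_factorial_mul_factorial m q
  have hm : (0 : ℝ) < √(m ! : ℝ) := Real.sqrt_pos.2 (by positivity)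
  have hs : (0 : ℝ) < √((m + q)! : ℝ) := Real.sqrt_pos.2 (by positivity)
  field_simp
  rw [Real.sq_sqrt (by positivity), Real.sq_sqrt (by positivity), ← hchoose]
  ring

theorem sum_antidiagonal_ite_choose_mul_div_sqrt_factorial (x y : ℝ) (n s : ℕ) :
    ∑ p ∈ antidiagonal s, (if n ≤ p.2 + p.1 then
        ((p.2 + p.1).choose p.1 : ℝ) * (x ^ p.1 * y ^ p.2) / √((p.2 + p.1)! : ℝ) else 0)
      = if n ≤ s then (x + y) ^ s / √(s ! : ℝ) else 0 := by
  rw [sum_congr rfl fun p hp => by rw [add_comm p.2, mem_antidiagonal.1 hp]]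
  split_ifs
  · rw [(Commute.all x y).add_pow', sum_div]
    simp only [nsmul_eq_mul]
  · simp


theorem hasSum_dyson_terms {B C : ℝ} (hB : 0 ≤ B) (hC : 0 ≤ C) (n : ℕ) :
    HasSum (fun qm : ℕ × ℕ =>
      if n - qm.1 ≤ qm.2 then
        B ^ qm.1 / (qm.1 ! : ℝ) * (√((qm.2 + qm.1)! : ℝ) / √(qm.2 ! : ℝ))
          * (C ^ qm.2 / √(qm.2 ! : ℝ))
      else 0) (∑' k, (B + C) ^ (k + n) / √((k + n)! : ℝ)) := by
  simp only [pow_div_factorial_mul_sqrt_factorial_div_eq_choose,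
    show ∀ q m, n - q ≤ m ↔ n ≤ m + q by omega]
  refine hasSum_of_hasSum_sum_antidiagonal (fun p => by dsimp only; split_ifs <;> positivity) ?_
  simpa only [sum_antidiagonal_ite_choose_mul_div_sqrt_factorial] using
    hasSum_ite_le_tsum_nat_add (summable_pow_div_sqrt_factorial (B + C)) n

theorem tsum_pow_add_div_sqrt_factorial_le {x : ℝ} (hx : 0 ≤ x) (n : ℕ) :
    ∑' k, x ^ (k + n) / √((k + n)! : ℝ) ≤ x ^ n / √(n ! : ℝ) * ∑' r, x ^ r / √(r ! : ℝ) := by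
  have hw := summable_pow_div_sqrt_factorial x
  rw [← tsum_mul_left]
  refine hw.comp_injective (add_left_injective n) |>.tsum_le_tsum (fun k => ?_) (hw.mul_left _)
  exact (pow_add_div_sqrt_factorial_le hx k n).trans_eq (mul_comm _ _)

theorem dyson_double_series_estimate_general
    (C : ℝ) (hC : 0 < C)
    (V t : ℝ) (hV : 0 ≤ V) (ht : 0 ≤ t) (n : ℕ) :
    Summable (fun qm : ℕ × ℕ =>
      if n - qm.1 ≤ qm.2 then
        (2 * t * V) ^ qm.1 / (qm.1.factorial : ℝ)
          * (Real.sqrt ((qm.2 + qm.1).factorial) / Real.sqrt (qm.2.factorial))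
          * (C ^ qm.2 / Real.sqrt (qm.2.factorial))
      else 0) ∧
    (∑' qm : ℕ × ℕ,
      if n - qm.1 ≤ qm.2 then
        (2 * t * V) ^ qm.1 / (qm.1.factorial : ℝ)
          * (Real.sqrt ((qm.2 + qm.1).factorial) / Real.sqrt (qm.2.factorial))
          * (C ^ qm.2 / Real.sqrt (qm.2.factorial))
      else 0)
      ≤ (2 * t * V + C) ^ n / Real.sqrt (n.factorial)
          * ∑' r : ℕ, (2 * t * V + C) ^ r / Real.sqrt (r.factorial) := by
  have hsum := hasSum_dyson_terms (by positivity : 0 ≤ 2 * t * V) hC.le n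
  exact ⟨hsum.summable, hsum.tsum_eq ▸ tsum_pow_add_div_sqrt_factorial_le (by positivity) n⟩

/-- Given `a_n ≤ Cⁿ/√(n!)` and `V, t ≥ 0`, the double series
`∑_{q≥0} ∑_{m ≥ max(n-q,0)} ((2tV)^q/q!) (√((m+q)!)/√(m!)) (C^m/√(m!))`
converges for every `n` and is bounded by `((2tV+C)ⁿ/√(n!)) ∑_{r≥0} (2tV+C)^r/√(r!)`. -/
theorem dyson_double_series_estimate
    (a : ℕ → ℝ) (ha_nonneg : ∀ n, 0 ≤ a n) (C : ℝ) (hC : 0 < C)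
    (ha : ∀ n, a n ≤ C ^ n / Real.sqrt (n.factorial))
    (V t : ℝ) (hV : 0 ≤ V) (ht : 0 ≤ t) (n : ℕ) :
    Summable (fun qm : ℕ × ℕ =>
      if n - qm.1 ≤ qm.2 then
        (2 * t * V) ^ qm.1 / (qm.1.factorial : ℝ)
          * (Real.sqrt ((qm.2 + qm.1).factorial) / Real.sqrt (qm.2.factorial))
          * (C ^ qm.2 / Real.sqrt (qm.2.factorial))
      else 0) ∧
    (∑' qm : ℕ × ℕ,
      if n - qm.1 ≤ qm.2 then
        (2 * t * V) ^ qm.1 / (qm.1.factorial : ℝ)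
          * (Real.sqrt ((qm.2 + qm.1).factorial) / Real.sqrt (qm.2.factorial))
          * (C ^ qm.2 / Real.sqrt (qm.2.factorial))
      else 0)
      ≤ (2 * t * V + C) ^ n / Real.sqrt (n.factorial)
          * ∑' r : ℕ, (2 * t * V + C) ^ r / Real.sqrt (r.factorial) :=
  dyson_double_series_estimate_general C hC V t hV ht n
end
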